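/- Let α = φ - 1, so that s_α is the Fibonacci infinite word. For each integer m > 1, let k_m denote the maximal exponent of an abelian power of period m occurring in s_α. Then limsup_{m→∞} k_m/m = √5. -/

import Mathlib

/-!
An abelian power of period `m` and exponent `e` starting at `n` says exactly that
`j ↦ ⌊(n + j m) α⌋` is an arithmetic progression for `j ≤ e`, i.e. that the points
`{n α} + j (m α - D)`, `j ≤ e`, all lie in `[0, 1)` for some integer `D`; hence `e |m α - D| < 1`.
For `α = φ⁻¹` the product `(m α - D) (m α + D + m) = m² - m D - D²` is a nonzero integer while
`|m α + D + m| < √5 m + 1`, so `e < √5 m + 1`. Conversely, with `m = F_{2i+1}`, `D = F_{2i}` and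
`n = F_{4i+3}` the step `m α - D` is `φ^{-(2i+1)}` and `{n α}` is tiny, which leaves room for the
exponent `F_{2i+2} + F_{2i} = √5 m - 2 φ^{-(2i+1)}`.
-/

open scoped Classical

/-- The Parikh vector (number of `a`'s, number of `b`'s) of the length-`m` factor of the
Sturmian word `s_{α,0}` starting at position `n`, where the letter at position `p ≥ 1` is
`a` iff `{pα} ≥ {-α} = 1 - α`. -/
noncomputable def sturmParikh (α : ℝ) (n m : ℕ) : ℕ × ℕ :=
  (((Finset.range m).filter fun i => 1 - α ≤ Int.fract (((n + i : ℕ) : ℝ) * α)).card,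
   ((Finset.range m).filter fun i => Int.fract (((n + i : ℕ) : ℝ) * α) < 1 - α).card)

/-- The Sturmian word `s_{α,0}` contains an abelian power of period `m` and exponent `k`:
some factor of length `k*m` splits into `k` blocks of length `m` with equal Parikh vectors. -/
noncomputable def HasAbelianPower (α : ℝ) (m k : ℕ) : Prop :=
  ∃ n : ℕ, 1 ≤ n ∧ ∀ j < k, sturmParikh α (n + j * m) m = sturmParikh α n m

open Filter Topology Finset Real goldenRatio

theorem limsup_div_eq_of_linear_bounds {u : ℕ → ℝ} {s : ℕ → ℕ} {c C : ℝ}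
    (hs : Tendsto s atTop atTop) (hle : ∀ᶠ m in atTop, u m ≤ c * m + C)
    (hge : ∀ᶠ i in atTop, c * s i - C ≤ u (s i)) :
    limsup (fun m : ℕ => u m / m) atTop = c := by
  set f := fun m : ℕ => u m / m
  have hpos : ∀ᶠ i in atTop, 0 < (s i : ℝ) := by
    filter_upwards [hs.eventually_gt_atTop 0] with i hi using by exact_mod_cast hi
  have hupper : Tendsto (fun m : ℕ => c + C / m) atTop (𝓝 c) := by
    simpa using tendsto_const_nhds.add (tendsto_const_div_atTop_nhds_zero_nat C)
  have hlower : Tendsto (fun i => c - C / s i) atTop (𝓝 c) := by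
    simpa using tendsto_const_nhds.sub ((tendsto_const_div_atTop_nhds_zero_nat C).comp hs)
  have hf_le : f ≤ᶠ[atTop] fun m => c + C / m := by
    filter_upwards [hle, eventually_gt_atTop 0] with m hm hm0
    have hm0' : (0 : ℝ) < m := by exact_mod_cast hm0
    rw [div_le_iff₀ hm0', add_mul, div_mul_cancel₀ _ hm0'.ne']
    linarith
  have hsub : Tendsto (f ∘ s) atTop (𝓝 c) := by
    refine tendsto_of_tendsto_of_tendsto_of_le_of_le' hlower (hupper.comp hs) ?_
      (hs.eventually hf_le)
    filter_upwards [hge, hpos] with i hi hi0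
    show c - C / s i ≤ u (s i) / s i
    rw [le_div_iff₀ hi0, sub_mul, div_mul_cancel₀ _ hi0.ne']
    linarith
  have hf_bdd : IsBoundedUnder (· ≤ ·) atTop f := hupper.isBoundedUnder_le.mono_le hf_le
  have hf_cobdd : IsCoboundedUnder (· ≤ ·) atTop f :=
    hsub.isCoboundedUnder_le.mono (map_mono hs)
  refine le_antisymm ?_ ?_
  · calc limsup f atTop ≤ limsup (fun m : ℕ => c + C / m) atTop :=
          limsup_le_limsup hf_le hf_cobdd hupper.isBoundedUnder_le
      _ = c := hupper.limsup_eq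
  · calc c = limsup (f ∘ s) atTop := hsub.limsup_eq.symm
      _ ≤ limsup f atTop := hs.limsup_comp_le_limsup hsub.isCoboundedUnder_le hf_bdd

theorem forall_sub_eq_sub_iff_exists_eq_add_nsmul {G : Type*} [AddCommGroup G] (g : ℕ → G)
    (e : ℕ) :
    (∀ j < e, g (j + 1) - g j = g 1 - g 0) ↔ ∃ d : G, ∀ j ≤ e, g j = g 0 + j • d := by
  constructor
  · intro h
    refine ⟨g 1 - g 0, fun j hj => ?_⟩
    induction j with
    | zero => simp
    | succ j ih =>
      rw [succ_nsmul, ← add_assoc, ← ih (by omega), ← h j (by omega)]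
      abel
  · rintro ⟨d, hd⟩ j hj
    rw [hd (j + 1) hj, hd j hj.le, hd 1 (by omega), hd 0 (Nat.zero_le _)]
    simp only [succ_nsmul, zero_smul, one_smul]
    abel

theorem floor_add_natCast_mul_eq_iff (x y : ℝ) (j : ℕ) (D : ℤ) :
    ⌊x + j * y⌋ = ⌊x⌋ + j * D ↔ Int.fract x + j * (y - D) ∈ Set.Ico 0 1 := by
  rw [Int.floor_eq_iff, Set.mem_Ico, Int.fract]
  push_cast
  constructor <;> rintro ⟨h₁, h₂⟩ <;> constructor <;> linarith

section Sturmian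

variable {α : ℝ}

theorem floor_natCast_add_one_mul (h₀ : 0 ≤ α) (h₁ : α < 1) (p : ℕ) :
    ⌊((p + 1 : ℕ) : ℝ) * α⌋ = ⌊(p : ℝ) * α⌋ + if 1 - α ≤ Int.fract ((p : ℝ) * α) then 1 else 0 := by
  have hsplit := Int.floor_add_fract ((p : ℝ) * α)
  have hf₀ := Int.fract_nonneg ((p : ℝ) * α)
  have hf₁ := Int.fract_lt_one ((p : ℝ) * α)
  rw [Int.floor_eq_iff]
  split_ifs <;> push_cast <;> constructor <;> linarith

theorem card_filter_one_sub_le_fract (h₀ : 0 ≤ α) (h₁ : α < 1) (n m : ℕ) :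
    ((#{i ∈ range m | 1 - α ≤ Int.fract (((n + i : ℕ) : ℝ) * α)} : ℕ) : ℤ) =
      ⌊((n + m : ℕ) : ℝ) * α⌋ - ⌊(n : ℝ) * α⌋ := by
  rw [card_filter, Nat.cast_sum]
  convert sum_range_sub (fun i => ⌊((n + i : ℕ) : ℝ) * α⌋) m using 2 with i
  · rw [← add_assoc, floor_natCast_add_one_mul h₀ h₁]
    split_ifs <;> simp
  · simp

theorem sturmParikh_eq_iff (h₀ : 0 ≤ α) (h₁ : α < 1) (n n' m : ℕ) :
    sturmParikh α n m = sturmParikh α n' m ↔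
      ⌊((n + m : ℕ) : ℝ) * α⌋ - ⌊(n : ℝ) * α⌋ = ⌊((n' + m : ℕ) : ℝ) * α⌋ - ⌊(n' : ℝ) * α⌋ := by
  have hsnd (q : ℕ) : #{i ∈ range m | Int.fract (((q + i : ℕ) : ℝ) * α) < 1 - α} =
      m - #{i ∈ range m | 1 - α ≤ Int.fract (((q + i : ℕ) : ℝ) * α)} := by
    simp_rw [← not_le, filter_not, card_sdiff_of_subset (filter_subset _ _), card_range]
  rw [← card_filter_one_sub_le_fract h₀ h₁, ← card_filter_one_sub_le_fract h₀ h₁, Nat.cast_inj]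
  simp only [sturmParikh, hsnd, Prod.mk.injEq, and_iff_left_iff_imp]
  exact fun h => by rw [h]

theorem hasAbelianPower_iff (h₀ : 0 ≤ α) (h₁ : α < 1) (m e : ℕ) :
    HasAbelianPower α m e ↔ ∃ n : ℕ, 1 ≤ n ∧
      ∃ D : ℤ, ∀ j ≤ e, Int.fract ((n : ℝ) * α) + j * (m * α - D) ∈ Set.Ico 0 1 := by
  refine exists_congr fun n => and_congr_right fun _ => ?_
  set g : ℕ → ℤ := fun j => ⌊((n + j * m : ℕ) : ℝ) * α⌋
  have hg (j : ℕ) : g j = ⌊(n : ℝ) * α + j * (m * α)⌋ := by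
    simp only [g]; push_cast; ring_nf
  calc (∀ j < e, sturmParikh α (n + j * m) m = sturmParikh α n m)
      ↔ ∀ j < e, g (j + 1) - g j = g 1 - g 0 := by
        refine forall₂_congr fun j _ => ?_
        rw [sturmParikh_eq_iff h₀ h₁]
        simp only [g, add_mul, one_mul, zero_mul, add_zero, add_assoc]
    _ ↔ ∃ D : ℤ, ∀ j ≤ e, g j = g 0 + j • D := forall_sub_eq_sub_iff_exists_eq_add_nsmul g e
    _ ↔ _ := by
        simp only [hg, nsmul_eq_mul, Nat.cast_zero, zero_mul, add_zero,
          floor_add_natCast_mul_eq_iff]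

theorem HasAbelianPower.exists_mul_abs_sub_lt_one {m e : ℕ} (h₀ : 0 ≤ α) (h₁ : α < 1)
    (h : HasAbelianPower α m e) : ∃ D : ℤ, e * |m * α - D| < 1 := by
  obtain ⟨n, -, D, hD⟩ := (hasAbelianPower_iff h₀ h₁ m e).1 h
  obtain ⟨hx₀, hx₁⟩ := hD 0 (Nat.zero_le e)
  obtain ⟨he₀, he₁⟩ := hD e le_rfl
  refine ⟨D, ?_⟩
  rw [← abs_of_nonneg (Nat.cast_nonneg (α := ℝ) e), ← abs_mul, abs_lt]
  push_cast at hx₀ hx₁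
  constructor <;> linarith

end Sturmian

theorem inv_goldenRatio_pos : 0 < φ⁻¹ := inv_pos.2 goldenRatio_pos

theorem inv_goldenRatio_lt_one : φ⁻¹ < 1 := inv_lt_one_of_one_lt₀ one_lt_goldenRatio

theorem goldenConj_eq_neg_inv_goldenRatio : ψ = -φ⁻¹ := by
  rw [inv_goldenRatio, neg_neg]

theorem goldenConj_pow_of_odd {n : ℕ} (hn : Odd n) : ψ ^ n = -φ⁻¹ ^ n := by
  rw [goldenConj_eq_neg_inv_goldenRatio, hn.neg_pow]

theorem sqrt_five_eq_two_mul_inv_goldenRatio_add_one : √5 = 2 * φ⁻¹ + 1 := by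
  rw [inv_goldenRatio]; ring

theorem inv_goldenRatio_sq_add_self : φ⁻¹ ^ 2 + φ⁻¹ = 1 := by
  rw [inv_goldenRatio, neg_sq, goldenConj_sq]; ring

theorem fib_succ_mul_inv_goldenRatio_of_even {n : ℕ} (hn : Even n) :
    (Nat.fib (n + 1) : ℝ) * φ⁻¹ = Nat.fib n + φ⁻¹ ^ (n + 1) := by
  have h := goldenConj_mul_fib_succ_add_fib n
  rw [goldenConj_pow_of_odd hn.add_one, goldenConj_eq_neg_inv_goldenRatio] at h
  linarith

theorem fib_add_two_add_fib_of_even {n : ℕ} (hn : Even n) :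
    (Nat.fib (n + 2) + Nat.fib n : ℝ) = φ ^ (n + 1) - φ⁻¹ ^ (n + 1) := by
  rw [← goldenRatio_mul_fib_succ_add_fib, ← neg_neg (φ⁻¹ ^ (n + 1)),
    ← goldenConj_pow_of_odd hn.add_one, ← goldenConj_mul_fib_succ_add_fib, Nat.fib_add_two]
  push_cast
  linear_combination (-(Nat.fib (n + 1) : ℝ)) * goldenRatio_add_goldenConj

theorem sqrt_five_mul_fib_of_odd {n : ℕ} (hn : Odd n) :
    √5 * Nat.fib n = φ ^ n + φ⁻¹ ^ n := by
  rw [coe_fib_eq, goldenConj_pow_of_odd hn, mul_div_cancel₀ _ (by positivity)]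
  ring

theorem one_le_abs_mul_inv_goldenRatio_sub_mul_abs {m : ℕ} (hm : m ≠ 0) (D : ℤ) :
    1 ≤ |m * φ⁻¹ - D| * |m * φ⁻¹ + D + m| := by
  have hirr : Irrational (m * φ⁻¹) := goldenRatio_irrational.inv.natCast_mul hm
  have hnorm : (m * φ⁻¹ - D) * (m * φ⁻¹ + D + m) = ((m ^ 2 - D * m - D ^ 2 : ℤ) : ℝ) := by
    push_cast
    linear_combination (m : ℝ) ^ 2 * inv_goldenRatio_sq_add_self
  have hne : m ^ 2 - D * m - D ^ 2 ≠ 0 := by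
    intro h
    rw [h, Int.cast_zero, mul_eq_zero, sub_eq_zero, add_assoc, add_eq_zero_iff_eq_neg] at hnorm
    rcases hnorm with h' | h'
    · exact hirr.ne_int D h'
    · exact hirr.ne_int (-(D + m)) (by push_cast; exact h')
  rw [← abs_mul, hnorm, ← Int.cast_abs]
  exact_mod_cast Int.one_le_abs hne

theorem HasAbelianPower.natCast_lt_sqrt_five_mul_add_one {m e : ℕ}
    (h : HasAbelianPower φ⁻¹ m e) (hm : m ≠ 0) : (e : ℝ) < √5 * m + 1 := by
  obtain ⟨D, hD⟩ := h.exists_mul_abs_sub_lt_one inv_goldenRatio_pos.le inv_goldenRatio_lt_one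
  rcases Nat.eq_zero_or_pos e with rfl | he
  · push_cast; positivity
  set δ := m * φ⁻¹ - D
  set S := m * φ⁻¹ + D + m
  have hδ : |δ| < 1 := by
    have : (1 : ℝ) ≤ e := by exact_mod_cast he
    nlinarith [abs_nonneg δ]
  have hS : |S| < √5 * m + 1 := by
    have hS_eq : S = √5 * m - δ := by
      simp only [S, δ, sqrt_five_eq_two_mul_inv_goldenRatio_add_one]; ring
    calc |S| ≤ |√5 * m| + |δ| := hS_eq ▸ abs_sub _ _
      _ < √5 * m + 1 := by rw [abs_of_nonneg (by positivity)]; linarith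
  calc (e : ℝ) ≤ e * (|δ| * |S|) :=
        le_mul_of_one_le_right (Nat.cast_nonneg e) (one_le_abs_mul_inv_goldenRatio_sub_mul_abs hm D)
    _ = (e * |δ|) * |S| := by ring
    _ ≤ |S| := mul_le_of_le_one_left (abs_nonneg S) hD.le
    _ < √5 * m + 1 := hS

theorem hasAbelianPower_inv_goldenRatio_fib (i : ℕ) :
    HasAbelianPower φ⁻¹ (Nat.fib (2 * i + 1)) (Nat.fib (2 * i + 2) + Nat.fib (2 * i)) := by
  rw [hasAbelianPower_iff inv_goldenRatio_pos.le inv_goldenRatio_lt_one]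
  refine ⟨Nat.fib (4 * i + 3), Nat.fib_pos.2 (by omega), Nat.fib (2 * i), fun j hj => ?_⟩
  set t := φ⁻¹ ^ (2 * i + 1)
  have ht : 0 < t := pow_pos inv_goldenRatio_pos _
  have ht₁ : t < 1 := pow_lt_one₀ inv_goldenRatio_pos.le inv_goldenRatio_lt_one (by omega)
  have hshift : φ⁻¹ * t ^ 2 < t ^ 2 := mul_lt_of_lt_one_left (by positivity) inv_goldenRatio_lt_one
  have hstart : Int.fract ((Nat.fib (4 * i + 3) : ℕ) * φ⁻¹) = φ⁻¹ * t ^ 2 := by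
    rw [Int.fract_eq_iff]
    refine ⟨by positivity, by nlinarith, ?_⟩
    refine ⟨Nat.fib (4 * i + 2), ?_⟩
    rw [fib_succ_mul_inv_goldenRatio_of_even ⟨2 * i + 1, by ring⟩]
    push_cast; ring
  have hstep : (Nat.fib (2 * i + 1) : ℝ) * φ⁻¹ - (Nat.fib (2 * i) : ℤ) = t := by
    rw [fib_succ_mul_inv_goldenRatio_of_even ⟨i, by ring⟩]; push_cast; ring
  have hlen : (Nat.fib (2 * i + 2) + Nat.fib (2 * i) : ℝ) * t = 1 - t ^ 2 := by
    rw [fib_add_two_add_fib_of_even ⟨i, by ring⟩, sub_mul, ← mul_pow,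
      mul_inv_cancel₀ goldenRatio_ne_zero, one_pow]; ring
  have hj' : (j : ℝ) * t ≤ (Nat.fib (2 * i + 2) + Nat.fib (2 * i) : ℝ) * t :=
    mul_le_mul_of_nonneg_right (by exact_mod_cast hj) ht.le
  rw [hstart, hstep]
  constructor
  · positivity
  · linarith

theorem sqrt_five_mul_fib_sub_two_le (i : ℕ) :
    √5 * Nat.fib (2 * i + 1) - 2 ≤ ((Nat.fib (2 * i + 2) + Nat.fib (2 * i) : ℕ) : ℝ) := by
  have hlucas := fib_add_two_add_fib_of_even (n := 2 * i) ⟨i, by ring⟩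
  have hfib := sqrt_five_mul_fib_of_odd (n := 2 * i + 1) ⟨i, rfl⟩
  have ht : φ⁻¹ ^ (2 * i + 1) ≤ 1 := pow_le_one₀ inv_goldenRatio_pos.le inv_goldenRatio_lt_one.le
  push_cast
  linarith

/-- Let `α = φ - 1 = (√5 - 1)/2`, so that `s_{α,0}` is the Fibonacci
infinite word. If `k m` is for every `m > 1` the maximal exponent of an abelian power of
period `m` in `s_{α,0}` (with `k m = 1` if there is none of exponent `≥ 2`), then
`limsup k_m/m = √5`. -/
theorem limsup_abelian_exponent_fibonacci_eq_sqrt5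
    (k : ℕ → ℕ)
    (hk : ∀ m, 1 < m →
      IsGreatest {e : ℕ | 2 ≤ e ∧ HasAbelianPower ((Real.sqrt 5 - 1) / 2) m e} (k m) ∨
      ((∀ e, 2 ≤ e → ¬ HasAbelianPower ((Real.sqrt 5 - 1) / 2) m e) ∧ k m = 1)) :
    Filter.limsup (fun m : ℕ => (k m : ℝ) / (m : ℝ)) Filter.atTop = Real.sqrt 5 := by
  rw [show (Real.sqrt 5 - 1) / 2 = φ⁻¹ by rw [inv_goldenRatio]; ring] at hk
  refine limsup_div_eq_of_linear_bounds (C := 2) (s := fun i => Nat.fib (2 * i + 1))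
    (tendsto_atTop_mono (fun i => show i ≤ _ by have := Nat.le_fib_add_one (2 * i + 1); omega)
      tendsto_id) ?_ ?_
  · filter_upwards [eventually_gt_atTop 1] with m hm
    rcases hk m hm with ⟨⟨-, hpow⟩, -⟩ | ⟨-, hk1⟩
    · linarith [hpow.natCast_lt_sqrt_five_mul_add_one (by omega)]
    · rw [hk1, Nat.cast_one]
      linarith [show 0 ≤ √5 * m by positivity]
  · filter_upwards [eventually_ge_atTop 1] with i hi
    have htwo_le_fib : ∀ n, 3 ≤ n → 2 ≤ Nat.fib n := fun n hn => Nat.fib_mono hn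
    have he : 2 ≤ Nat.fib (2 * i + 2) + Nat.fib (2 * i) := (htwo_le_fib _ (by omega)).trans le_self_add
    have hpow := hasAbelianPower_inv_goldenRatio_fib i
    have hke : Nat.fib (2 * i + 2) + Nat.fib (2 * i) ≤ k (Nat.fib (2 * i + 1)) := by
      rcases hk _ (htwo_le_fib (2 * i + 1) (by omega)) with ⟨-, hmax⟩ | ⟨hnone, -⟩
      · exact hmax ⟨he, hpow⟩
      · exact absurd hpow (hnone _ he)
    exact (sqrt_five_mul_fib_sub_two_le i).trans (by exact_mod_cast hke)
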